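/- For all real x with −1 ≤ x ≤ 1 and all n ≥ 0, the second derivative of the Legendre polynomial satisfies |P_n''(x)| ≤ (n−1)·n·(n+1)·(n+2)/8. -/

import Mathlib

/-!
The identity `P'ₙ₊₂ = P'ₙ + (2n+3) Pₙ₊₁` carries a bound of the form
`|Pₙ⁽ᵏ⁾(x)| ≤ Pₙ⁽ᵏ⁾(1)` on `[-1, 1]` from `k` to `k + 1`, by induction on `n`, starting from
`|Pₙ| ≤ 1`. The latter holds because, by Legendre's equation, `F = n(n+1) Pₙ² + (1 - x²) P'ₙ²`
satisfies `F' = 2x P'ₙ²`, so `F` is largest at `±1`, where it equals `n(n+1)`. Finally, `P''ₙ(1)` is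
read off Legendre's equation, differentiated once, at `x = 1`.
-/

open Polynomial in
noncomputable def legendre : ℕ → Polynomial ℝ
  | 0 => 1
  | 1 => X
  | (n + 2) =>
      C ((2 * (n : ℝ) + 3) / ((n : ℝ) + 2)) * (X * legendre (n + 1))
        - C (((n : ℝ) + 1) / ((n : ℝ) + 2)) * legendre n

open Polynomial

lemma legendre_add_two (n : ℕ) :
    (n + 2 : ℝ[X]) * legendre (n + 2) =
      (2 * n + 3 : ℝ[X]) * X * legendre (n + 1) - (n + 1 : ℝ[X]) * legendre n := by
  have hn : (n : ℝ) + 2 ≠ 0 := by positivity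
  have hC : (n + 2 : ℝ[X]) = C ((n : ℝ) + 2) := by rw [map_add, map_natCast, map_ofNat]
  rw [hC, legendre]
  simp only [mul_sub, ← mul_assoc, ← C_mul, mul_div_cancel₀ _ hn]
  simp only [map_add, map_mul, map_natCast, map_ofNat, map_one]

lemma derivative_legendre_succ_and_X_mul (n : ℕ) :
    derivative (legendre (n + 1)) = X * derivative (legendre n) + (n + 1 : ℝ[X]) * legendre n ∧
      X * derivative (legendre (n + 1)) =
        derivative (legendre n) + (n + 1 : ℝ[X]) * legendre (n + 1) := by
  induction n with
  | zero => simp [legendre]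
  | succ n ih =>
    obtain ⟨hA, hB⟩ := ih
    have hn : (n + 2 : ℝ[X]) ≠ 0 := by norm_cast
    have hrec := legendre_add_two n
    have hd := congrArg derivative hrec
    simp only [derivative_mul, derivative_sub, derivative_add, derivative_X, derivative_natCast,
      derivative_ofNat, derivative_one] at hd
    have hA' : derivative (legendre (n + 2)) =
        X * derivative (legendre (n + 1)) + (n + 2 : ℝ[X]) * legendre (n + 1) := by
      apply mul_left_cancel₀ hn
      linear_combination hd + (n + 1 : ℝ[X]) * hB
    push_cast
    constructor
    · linear_combination hA'
    · apply mul_left_cancel₀ hn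
      linear_combination (n + 2 : ℝ[X]) * (X * hA' + X * hB - hA - hrec)

lemma derivative_legendre_succ (n : ℕ) :
    derivative (legendre (n + 1)) = X * derivative (legendre n) + (n + 1 : ℝ[X]) * legendre n :=
  (derivative_legendre_succ_and_X_mul n).1

lemma X_mul_derivative_legendre_succ (n : ℕ) :
    X * derivative (legendre (n + 1)) =
      derivative (legendre n) + (n + 1 : ℝ[X]) * legendre (n + 1) :=
  (derivative_legendre_succ_and_X_mul n).2

lemma derivative_legendre_add_two (n : ℕ) :
    derivative (legendre (n + 2)) =
      derivative (legendre n) + (2 * n + 3 : ℝ[X]) * legendre (n + 1) := by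
  have hA := derivative_legendre_succ (n + 1)
  push_cast at hA
  linear_combination hA + X_mul_derivative_legendre_succ n

lemma legendre_ode (n : ℕ) :
    (X ^ 2 - 1) * derivative (derivative (legendre n)) + 2 * X * derivative (legendre n) =
      (n * (n + 1) : ℝ[X]) * legendre n := by
  cases n with
  | zero => simp [legendre]
  | succ m =>
    have hA := derivative_legendre_succ m
    have hB := X_mul_derivative_legendre_succ m
    have hd := congrArg derivative (show (X ^ 2 - 1) * derivative (legendre (m + 1)) =
        (m + 1 : ℝ[X]) * (X * legendre (m + 1) - legendre m) by linear_combination X * hB - hA)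
    simp only [derivative_mul, derivative_sub, derivative_add, derivative_X, derivative_natCast,
      derivative_X_pow, derivative_one, map_ofNat, Nat.cast_ofNat] at hd
    push_cast
    linear_combination hd + (m + 1 : ℝ[X]) * hB

lemma legendre_eval_one (n : ℕ) : (legendre n).eval 1 = 1 := by
  induction n using Nat.twoStepInduction with
  | zero => simp [legendre]
  | one => simp [legendre]
  | more n h₀ h₁ =>
    have h := congrArg (eval 1) (legendre_add_two n)
    simp only [eval_mul, eval_add, eval_sub, eval_natCast, eval_X, eval_ofNat, eval_one, h₀,
      h₁] at h
    exact mul_left_cancel₀ (by positivity : (n : ℝ) + 2 ≠ 0) (by linear_combination h)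

lemma legendre_eval_neg_one (n : ℕ) : (legendre n).eval (-1) = (-1) ^ n := by
  induction n using Nat.twoStepInduction with
  | zero => simp [legendre]
  | one => simp [legendre]
  | more n h₀ h₁ =>
    have h := congrArg (eval (-1)) (legendre_add_two n)
    simp only [eval_mul, eval_add, eval_sub, eval_natCast, eval_X, eval_ofNat, eval_one, h₀,
      h₁] at h
    exact mul_left_cancel₀ (by positivity : (n : ℝ) + 2 ≠ 0) (by linear_combination h)

lemma le_max_of_mul_deriv_nonneg {f : ℝ → ℝ} (hf : Differentiable ℝ f)
    (hf' : ∀ y, 0 ≤ y * deriv f y) {a b x : ℝ} (hax : a ≤ x) (hxb : x ≤ b) :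
    f x ≤ max (f a) (f b) := by
  rcases le_or_gt 0 x with hx | hx
  · have hmono : MonotoneOn f (Set.Ici 0) :=
      monotoneOn_of_deriv_nonneg (convex_Ici 0) hf.continuous.continuousOn hf.differentiableOn
        fun y hy => by
          rw [interior_Ici] at hy
          exact nonneg_of_mul_nonneg_right (hf' y) hy
    exact le_max_of_le_right (hmono hx (hx.trans hxb) hxb)
  · have hanti : AntitoneOn f (Set.Iic 0) :=
      antitoneOn_of_deriv_nonpos (convex_Iic 0) hf.continuous.continuousOn hf.differentiableOn
        fun y hy => by
          rw [interior_Iic] at hy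
          exact nonpos_of_mul_nonneg_right (hf' y) hy
    exact le_max_of_le_left (hanti (hax.trans hx.le) hx.le hax)

noncomputable def legendreEnergy (n : ℕ) : ℝ[X] :=
  (n * (n + 1) : ℝ[X]) * legendre n ^ 2 + (1 - X ^ 2) * derivative (legendre n) ^ 2

lemma derivative_legendreEnergy (n : ℕ) :
    derivative (legendreEnergy n) = 2 * X * derivative (legendre n) ^ 2 := by
  simp only [legendreEnergy, derivative_add, derivative_mul, derivative_pow, derivative_sub,
    derivative_natCast, derivative_one, derivative_X, map_ofNat, Nat.cast_ofNat]
  linear_combination (-2 * derivative (legendre n)) * legendre_ode n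

lemma legendreEnergy_eval_of_sq_eq_one (n : ℕ) {y : ℝ} (hy : y ^ 2 = 1) :
    (legendreEnergy n).eval y = n * (n + 1) * (legendre n).eval y ^ 2 := by
  simp [legendreEnergy, hy]

lemma legendreEnergy_eval_le (n : ℕ) {x : ℝ} (hx : x ∈ Set.Icc (-1) 1) :
    (legendreEnergy n).eval x ≤ n * (n + 1) := by
  have h1 : (legendreEnergy n).eval 1 = n * (n + 1) := by
    rw [legendreEnergy_eval_of_sq_eq_one n (one_pow 2), legendre_eval_one, one_pow, mul_one]
  have h2 : (legendreEnergy n).eval (-1) = n * (n + 1) := by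
    rw [legendreEnergy_eval_of_sq_eq_one n neg_one_sq, legendre_eval_neg_one, ← pow_mul,
      pow_mul', neg_one_sq, one_pow, mul_one]
  have hderiv (y : ℝ) : 0 ≤ y * deriv (fun t => (legendreEnergy n).eval t) y := by
    rw [Polynomial.deriv, derivative_legendreEnergy]
    simp only [eval_mul, eval_pow, eval_X, eval_ofNat]
    nlinarith [sq_nonneg (y * (derivative (legendre n)).eval y)]
  simpa only [h1, h2, max_self] using
    le_max_of_mul_deriv_nonneg (legendreEnergy n).differentiable hderiv hx.1 hx.2

lemma abs_eval_legendre_le_one (n : ℕ) {x : ℝ} (hx : x ∈ Set.Icc (-1) 1) :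
    |(legendre n).eval x| ≤ 1 := by
  rcases Nat.eq_zero_or_pos n with rfl | hn
  · simp [legendre]
  have hx2 : x ^ 2 ≤ 1 := by rw [sq_le_one_iff_abs_le_one, abs_le]; exact hx
  have hsq : n * (n + 1) * (legendre n).eval x ^ 2 ≤ n * (n + 1) := by
    refine le_trans ?_ (legendreEnergy_eval_le n hx)
    simp only [legendreEnergy, eval_add, eval_mul, eval_pow, eval_sub, eval_one, eval_X,
      eval_natCast]
    nlinarith [sq_nonneg ((derivative (legendre n)).eval x)]
  rw [← sq_le_one_iff_abs_le_one]
  exact (mul_le_iff_le_one_right (by positivity)).1 hsq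

lemma iterate_derivative_legendre_add_two (k n : ℕ) :
    derivative^[k + 1] (legendre (n + 2)) =
      derivative^[k + 1] (legendre n) + (2 * n + 3 : ℝ[X]) * derivative^[k] (legendre (n + 1)) := by
  rw [Function.iterate_succ_apply, Function.iterate_succ_apply, derivative_legendre_add_two,
    iterate_map_add, show (2 * n + 3 : ℝ[X]) = ((2 * n + 3 : ℕ) : ℝ[X]) by push_cast; rfl,
    iterate_derivative_natCast_mul]

lemma abs_eval_iterate_derivative_legendre_le (k n : ℕ) {x : ℝ} (hx : x ∈ Set.Icc (-1) 1) :
    |(derivative^[k] (legendre n)).eval x| ≤ (derivative^[k] (legendre n)).eval 1 := by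
  induction k generalizing n with
  | zero => simpa [legendre_eval_one] using abs_eval_legendre_le_one n hx
  | succ k ihk =>
    induction n using Nat.twoStepInduction with
    | zero => simp [legendre]
    | one => cases k <;> simp [legendre]
    | more n ihn _ =>
      have hc : (0 : ℝ) ≤ 2 * n + 3 := by positivity
      simp only [iterate_derivative_legendre_add_two, eval_add, eval_mul, eval_natCast, eval_ofNat]
      calc _ ≤ |(derivative^[k + 1] (legendre n)).eval x|
              + (2 * n + 3) * |(derivative^[k] (legendre (n + 1))).eval x| := by
            grw [abs_add_le, abs_mul, abs_of_nonneg hc]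
        _ ≤ _ := by grw [ihn, ihk (n + 1)]

lemma derivative_legendre_eval_one (n : ℕ) :
    (derivative (legendre n)).eval 1 = n * (n + 1) / 2 := by
  have h := congrArg (eval 1) (legendre_ode n)
  simp only [eval_add, eval_mul, eval_sub, eval_pow, eval_X, eval_one, eval_ofNat, eval_natCast,
    legendre_eval_one] at h
  linear_combination h / 2

lemma derivative_derivative_legendre_eval_one (n : ℕ) :
    (derivative (derivative (legendre n))).eval 1 = (n - 1) * n * (n + 1) * (n + 2) / 8 := by
  have h := congrArg (fun p => (derivative p).eval 1) (legendre_ode n)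
  simp only [derivative_add, derivative_mul, derivative_sub, derivative_X_pow, derivative_one,
    derivative_X, derivative_natCast, derivative_ofNat, eval_add, eval_mul, eval_sub, eval_pow,
    eval_X, eval_one, eval_ofNat, eval_natCast, eval_C, eval_zero, Nat.cast_ofNat,
    derivative_legendre_eval_one] at h
  linear_combination h / 4

open Polynomial in
/-- Bound for the second derivative of the Legendre polynomial on [-1,1]. -/
theorem legendre_second_deriv_bound (n : ℕ) (x : ℝ) (hx : -1 ≤ x) (hx' : x ≤ 1) :
    |(derivative (derivative (legendre n))).eval x| ≤
      ((n : ℝ) - 1) * (n : ℝ) * ((n : ℝ) + 1) * ((n : ℝ) + 2) / 8 := by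
  rw [← derivative_derivative_legendre_eval_one]
  exact abs_eval_iterate_derivative_legendre_le 2 n ⟨hx, hx'⟩
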